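/- arXiv:1208.2730 — 2 statements merged into one kernel-verified Lean document; each statement's English description precedes it below -/
import Mathlib

section
/- Let b and c be nonnegative integers and let (n′_1, …, n′_j) be a sequence of nonnegative integers. Assume it is not the case that n′_1 + … + n′_j = b + 3c and (n′_1, …, n′_j) fails to be (b,c)-reachable. Then: if n′_1 + … + n′_j ≤ b + 3c, there exists a (b,c)-reachable sequence (n_1, …, n_j) with n_k ≥ n′_k for every k; and if n′_1 + … + n′_j ≥ b + 3c, there exists a (b,c)-reachable sequence (n_1, …, n_j) with n_k ≤ n′_k for every k. -/
/-!
A play adds `b` unit vectors and `c` triples (the increments of moves (2)–(4)), in any order.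
Going down, peel off triples and single dots lying below `n'`: a configuration with at least
four dots always dominates a triple. Going up, first pad `n'` to exactly `b + 3c - 1` dots;
peeling off single dots and then triples lying below it then ends at exactly two dots, and any
two dots lie below one triple. Three dots would not do: `(2, 1)` lies below no triple.
-/

/-- Add `d` dots to column `i`. -/
def addDots {j : ℕ} (i : Fin j) (d : ℕ) (f : Fin j → ℕ) : Fin j → ℕ :=
  Function.update f i (f i + d)

/-- `DotReachable b c n` means that the dot configuration `n` on `j` columns can be
produced by a play of the game consisting of exactly `b` moves of type (1) and exactly
`c` further moves, each of type (2), (3), or (4):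
(1) add one dot to any one column; (2) add one dot to each of three distinct columns;
(3) choose columns `i < i'` and add one dot to column `i` and two dots to column `i'`;
(4) add three dots to a single column. -/
inductive DotReachable {j : ℕ} : ℕ → ℕ → (Fin j → ℕ) → Prop
  | init : DotReachable 0 0 (fun _ => 0)
  | move1 {b c : ℕ} {f : Fin j → ℕ} (i : Fin j) :
      DotReachable b c f → DotReachable (b + 1) c (addDots i 1 f)
  | move2 {b c : ℕ} {f : Fin j → ℕ} (i₁ i₂ i₃ : Fin j)
      (h₁₂ : i₁ ≠ i₂) (h₁₃ : i₁ ≠ i₃) (h₂₃ : i₂ ≠ i₃) :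
      DotReachable b c f →
        DotReachable b (c + 1) (addDots i₁ 1 (addDots i₂ 1 (addDots i₃ 1 f)))
  | move3 {b c : ℕ} {f : Fin j → ℕ} (i i' : Fin j) (h : i < i') :
      DotReachable b c f → DotReachable b (c + 1) (addDots i 1 (addDots i' 2 f))
  | move4 {b c : ℕ} {f : Fin j → ℕ} (i : Fin j) :
      DotReachable b c f → DotReachable b (c + 1) (addDots i 3 f)

open Finset

section

variable {j : ℕ}

lemma addDots_eq_add_single (i : Fin j) (d : ℕ) (f : Fin j → ℕ) :
    addDots i d f = f + Pi.single i d := by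
  ext x
  by_cases hx : x = i
  · subst hx; simp [addDots]
  · simp [addDots, hx]

/-- The dots added by a move of type (2), (3) or (4). -/
inductive IsTripleMove : (Fin j → ℕ) → Prop
  | three_columns {i₁ i₂ i₃ : Fin j} : i₁ ≠ i₂ → i₁ ≠ i₃ → i₂ ≠ i₃ →
      IsTripleMove (Pi.single i₁ 1 + Pi.single i₂ 1 + Pi.single i₃ 1)
  | one_two {i i' : Fin j} : i < i' → IsTripleMove (Pi.single i 1 + Pi.single i' 2)
  | three_dots (i : Fin j) : IsTripleMove (Pi.single i 3)

lemma IsTripleMove.sum_eq {p : Fin j → ℕ} (hp : IsTripleMove p) : ∑ k, p k = 3 := by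
  cases hp <;> simp [sum_add_distrib]

namespace DotReachable

variable {b c : ℕ} {f : Fin j → ℕ}

lemma add_single (h : DotReachable b c f) (i : Fin j) :
    DotReachable (b + 1) c (f + Pi.single i 1) := by
  simpa only [addDots_eq_add_single] using h.move1 i

lemma add_isTripleMove (h : DotReachable b c f) {p : Fin j → ℕ} (hp : IsTripleMove p) :
    DotReachable b (c + 1) (f + p) := by
  cases hp with
  | three_columns h₁₂ h₁₃ h₂₃ =>
    simpa only [addDots_eq_add_single, add_assoc, add_comm, add_left_comm]
      using h.move2 _ _ _ h₁₂ h₁₃ h₂₃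
  | one_two hlt =>
    simpa only [addDots_eq_add_single, add_assoc, add_comm, add_left_comm] using h.move3 _ _ hlt
  | three_dots i => simpa only [addDots_eq_add_single] using h.move4 i

end DotReachable

lemma sum_tsub_of_le {f g : Fin j → ℕ} (h : g ≤ f) :
    ∑ k, (f - g) k = ∑ k, f k - ∑ k, g k :=
  sum_tsub_distrib _ fun k _ => h k

lemma single_le_iff {a : Fin j} {d : ℕ} {f : Fin j → ℕ} :
    Pi.single a d ≤ f ↔ d ≤ f a := by
  refine ⟨fun h => by simpa using h a, fun h x => ?_⟩
  by_cases hx : x = a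
  · subst hx; simpa using h
  · simp [hx]

lemma single_add_single_le {a b : Fin j} (hab : a ≠ b) {d e : ℕ} {f : Fin j → ℕ}
    (ha : d ≤ f a) (hb : e ≤ f b) : Pi.single a d + Pi.single b e ≤ f := fun x => by
  by_cases hxa : x = a
  · subst hxa; simpa [hab] using ha
  · by_cases hxb : x = b
    · subst hxb; simpa [hxa] using hb
    · simp [hxa, hxb]

lemma exists_single_le_of_sum_pos {f : Fin j → ℕ} (h : 0 < ∑ k, f k) :
    ∃ a, Pi.single a 1 ≤ f := by
  obtain ⟨a, -, ha⟩ := exists_ne_zero_of_sum_ne_zero h.ne'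
  exact ⟨a, single_le_iff.2 (Nat.one_le_iff_ne_zero.2 ha)⟩

lemma exists_isTripleMove_le_of_four_le_sum {f : Fin j → ℕ} (h : 4 ≤ ∑ k, f k) :
    ∃ p, IsTripleMove p ∧ p ≤ f := by
  classical
  by_cases h3 : ∃ a, 3 ≤ f a
  · obtain ⟨a, ha⟩ := h3
    exact ⟨_, .three_dots a, single_le_iff.2 ha⟩
  push Not at h3
  set S := univ.filter fun k => f k ≠ 0
  have hS : ∑ k ∈ S, f k = ∑ k, f k := sum_filter_ne_zero _
  by_cases hcard : 2 < #S
  · obtain ⟨a, ha, b, hb, c, hc, hab, hac, hbc⟩ := two_lt_card.1 hcard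
    simp only [S, mem_filter, mem_univ, true_and] at ha hb hc
    refine ⟨_, .three_columns hab hac hbc, fun x => ?_⟩
    simp only [Pi.add_apply, Pi.single_apply]
    split_ifs <;> simp_all <;> omega
  -- the dots sit in two columns, two in each
  have hle : ∑ k ∈ S, f k ≤ #S * 2 :=
    sum_le_card_nsmul _ _ _ fun k _ => by have := h3 k; omega
  obtain ⟨a, b, hab, hSab⟩ := card_eq_two.1 (by omega : #S = 2)
  rw [hSab, sum_pair hab] at hS
  have ha := h3 a
  have hb := h3 b
  rcases hab.lt_or_gt with hlt | hlt
  · exact ⟨_, .one_two hlt, single_add_single_le hab (by omega) (by omega)⟩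
  · exact ⟨_, .one_two hlt, single_add_single_le hab.symm (by omega) (by omega)⟩

lemma exists_isTripleMove_ge_of_sum_eq_two {f : Fin j → ℕ} (h : ∑ k, f k = 2) :
    ∃ p, IsTripleMove p ∧ f ≤ p := by
  obtain ⟨a, ha⟩ := exists_single_le_of_sum_pos (f := f) (by omega)
  obtain ⟨b, hb⟩ := exists_single_le_of_sum_pos (f := f - Pi.single a 1)
    (by rw [sum_tsub_of_le ha, Fintype.sum_pi_single']; omega)
  have hrest : f - Pi.single a 1 - Pi.single b 1 = 0 := by
    ext k
    refine sum_eq_zero_iff.1 ?_ k (mem_univ k)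
    rw [sum_tsub_of_le hb, sum_tsub_of_le ha, Fintype.sum_pi_single', Fintype.sum_pi_single']
    omega
  obtain rfl : f = Pi.single a 1 + Pi.single b 1 := by
    rw [← tsub_add_cancel_of_le ha, ← tsub_add_cancel_of_le hb, hrest, zero_add, add_comm]
  rcases lt_trichotomy a b with hab | rfl | hab
  · exact ⟨_, .one_two hab, add_le_add_right (Pi.single_mono b one_le_two) _⟩
  · exact ⟨_, .three_dots a, by rw [← Pi.single_add]; exact Pi.single_mono a (by norm_num)⟩
  · refine ⟨_, .one_two hab, ?_⟩
    rw [add_comm]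
    exact add_le_add_right (Pi.single_mono a one_le_two) _

lemma exists_dotReachable_zero_le (c : ℕ) {f : Fin j → ℕ} (h : 3 * c < ∑ k, f k) :
    ∃ n, DotReachable 0 c n ∧ n ≤ f := by
  induction c generalizing f with
  | zero => exact ⟨_, .init, fun _ => Nat.zero_le _⟩
  | succ c ih =>
    obtain ⟨p, hp, hpf⟩ := exists_isTripleMove_le_of_four_le_sum (f := f) (by omega)
    obtain ⟨n, hn, hnf⟩ := ih (f := f - p) (by rw [sum_tsub_of_le hpf, hp.sum_eq]; omega)
    exact ⟨n + p, hn.add_isTripleMove hp, (le_tsub_iff_right hpf).1 hnf⟩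

lemma exists_dotReachable_le (b c : ℕ) {f : Fin j → ℕ} (h : b + 3 * c < ∑ k, f k) :
    ∃ n, DotReachable b c n ∧ n ≤ f := by
  induction b generalizing f with
  | zero => exact exists_dotReachable_zero_le c (by omega)
  | succ b ih =>
    obtain ⟨a, ha⟩ := exists_single_le_of_sum_pos (f := f) (by omega)
    obtain ⟨n, hn, hnf⟩ := ih (f := f - Pi.single a 1)
      (by rw [sum_tsub_of_le ha, Fintype.sum_pi_single']; omega)
    exact ⟨n + _, hn.add_single a, (le_tsub_iff_right ha).1 hnf⟩

lemma exists_dotReachable_zero_ge (c : ℕ) {f : Fin j → ℕ} (h : ∑ k, f k = 3 * c + 2) :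
    ∃ n, DotReachable 0 (c + 1) n ∧ f ≤ n := by
  induction c generalizing f with
  | zero =>
    obtain ⟨p, hp, hfp⟩ := exists_isTripleMove_ge_of_sum_eq_two h
    exact ⟨_, DotReachable.init.add_isTripleMove hp, hfp.trans_eq (zero_add p).symm⟩
  | succ c ih =>
    obtain ⟨p, hp, hpf⟩ := exists_isTripleMove_le_of_four_le_sum (f := f) (by omega)
    obtain ⟨n, hn, hfn⟩ := ih (f := f - p) (by rw [sum_tsub_of_le hpf, hp.sum_eq]; omega)
    exact ⟨n + p, hn.add_isTripleMove hp, tsub_le_iff_right.1 hfn⟩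

lemma exists_dotReachable_ge_of_sum_add_one_eq (hj : 0 < j) (b c : ℕ) {f : Fin j → ℕ}
    (h : ∑ k, f k + 1 = b + 3 * c) : ∃ n, DotReachable b c n ∧ f ≤ n := by
  induction b generalizing f with
  | zero =>
    obtain ⟨c, rfl⟩ : ∃ c', c = c' + 1 := ⟨c - 1, by omega⟩
    exact exists_dotReachable_zero_ge c (by omega)
  | succ b ih =>
    rcases (∑ k, f k).eq_zero_or_pos with h0 | hpos
    · obtain ⟨rfl, rfl⟩ : b = 0 ∧ c = 0 := by omega
      refine ⟨_, DotReachable.init.add_single ⟨0, hj⟩, fun k => ?_⟩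
      simp [sum_eq_zero_iff.1 h0 k (mem_univ k)]
    · obtain ⟨a, ha⟩ := exists_single_le_of_sum_pos hpos
      obtain ⟨n, hn, hfn⟩ := ih (f := f - Pi.single a 1)
        (by rw [sum_tsub_of_le ha, Fintype.sum_pi_single']; omega)
      exact ⟨n + _, hn.add_single a, tsub_le_iff_right.1 hfn⟩

lemma exists_dotReachable_ge (hj : 0 < j) (b c : ℕ) {f : Fin j → ℕ}
    (h : ∑ k, f k < b + 3 * c) : ∃ n, DotReachable b c n ∧ f ≤ n := by
  obtain ⟨n, hn, hfn⟩ := exists_dotReachable_ge_of_sum_add_one_eq hj b c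
    (f := f + Pi.single ⟨0, hj⟩ (b + 3 * c - 1 - ∑ k, f k))
    (by simp only [Pi.add_apply, sum_add_distrib, Fintype.sum_pi_single']; omega)
  exact ⟨n, hn, le_trans (fun k => Nat.le_add_right _ _) hfn⟩

end

/-- Assume it is not the case that `n'` sums to `b + 3c` and fails to be
`(b, c)`-reachable. Then: if the sum of `n'` is at most `b + 3c`, there is a
`(b, c)`-reachable sequence dominating `n'` termwise, and if the sum of `n'` is at
least `b + 3c`, there is a `(b, c)`-reachable sequence dominated by `n'` termwise. -/
theorem dot_reachable_up_down {j : ℕ} (hj : 0 < j) (b c : ℕ) (n' : Fin j → ℕ)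
    (h : ¬((∑ k, n' k) = b + 3 * c ∧ ¬ DotReachable b c n')) :
    ((∑ k, n' k) ≤ b + 3 * c →
      ∃ n : Fin j → ℕ, DotReachable b c n ∧ ∀ k, n' k ≤ n k) ∧
    (b + 3 * c ≤ (∑ k, n' k) →
      ∃ n : Fin j → ℕ, DotReachable b c n ∧ ∀ k, n k ≤ n' k) := by
  have reachable (heq : ∑ k, n' k = b + 3 * c) : DotReachable b c n' :=
    not_not.1 fun hn => h ⟨heq, hn⟩
  refine ⟨fun hle => ?_, fun hge => ?_⟩
  · rcases hle.lt_or_eq with hlt | heq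
    · exact exists_dotReachable_ge hj b c hlt
    · exact ⟨n', reachable heq, fun _ => le_rfl⟩
  · rcases hge.lt_or_eq with hlt | heq
    · exact exists_dotReachable_le b c hlt
    · exact ⟨n', reachable heq.symm, fun _ => le_rfl⟩
end

section
/- Let m ≥ 5 be an integer, let a, b, c be nonnegative integers with a = 0 or c = 0, and let (n_1, …, n_j) be a sequence of positive integers with n_1 + … + n_j = a + b + 3c which has one of the following three forms, where n_1 ∈ {2m, 2m−2, 2m−4}: (1) m is even, j = m/2 + 1, n_k = 2m − 4(k−1) for 2 ≤ k ≤ m/2, and n_j = 1; (2) m is even, j = m/2, and n_k = 2m − 4(k−1) for 2 ≤ k ≤ j; (3) m is odd, j = (m+1)/2, and n_k = 2m − 4(k−1) for 2 ≤ k ≤ j. Then (n_1, …, n_j) is (a,b,c)-elliptic-reachable. -/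
/-- Add to column `i` the triple `s = (number of ✓'s, number of −'s, number of +'s)`. -/
def addSyms {j : ℕ} (i : Fin j) (s : ℕ × ℕ × ℕ) (f : Fin j → ℕ × ℕ × ℕ) :
    Fin j → ℕ × ℕ × ℕ :=
  Function.update f i (f i + s)

/-- `EllipticPlay a b c f` means that the configuration `f` — recording for each of the
`j` columns the triple (number of ✓'s, number of −'s, number of +'s) — can be produced
by a play of the game consisting of exactly `a` moves of type (1), exactly `b` moves of
type (2), and exactly `c` further moves, each of type (3), (4), or (5):
(1) add a ✓ to any one column; (2) add a − to any one column;
(3) choose distinct columns `i₁, i₂` and a column `i₃` with `i₁ < i₃` and `i₂ < i₃`, and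
add a − to each of columns `i₁` and `i₂` and a + to column `i₃`;
(4) choose columns `i < i'` and add a − to column `i` and both a + and a − to column
`i'`; (5) add one + and two −'s to a single column. -/
inductive EllipticPlay {j : ℕ} : ℕ → ℕ → ℕ → (Fin j → ℕ × ℕ × ℕ) → Prop
  | init : EllipticPlay 0 0 0 (fun _ => (0, 0, 0))
  | move1 {a b c : ℕ} {f : Fin j → ℕ × ℕ × ℕ} (i : Fin j) :
      EllipticPlay a b c f → EllipticPlay (a + 1) b c (addSyms i (1, 0, 0) f)
  | move2 {a b c : ℕ} {f : Fin j → ℕ × ℕ × ℕ} (i : Fin j) :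
      EllipticPlay a b c f → EllipticPlay a (b + 1) c (addSyms i (0, 1, 0) f)
  | move3 {a b c : ℕ} {f : Fin j → ℕ × ℕ × ℕ} (i₁ i₂ i₃ : Fin j)
      (h₁₂ : i₁ ≠ i₂) (h₁₃ : i₁ < i₃) (h₂₃ : i₂ < i₃) :
      EllipticPlay a b c f → EllipticPlay a b (c + 1)
        (addSyms i₁ (0, 1, 0) (addSyms i₂ (0, 1, 0) (addSyms i₃ (0, 0, 1) f)))
  | move4 {a b c : ℕ} {f : Fin j → ℕ × ℕ × ℕ} (i i' : Fin j) (h : i < i') :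
      EllipticPlay a b c f → EllipticPlay a b (c + 1)
        (addSyms i (0, 1, 0) (addSyms i' (0, 1, 1) f))
  | move5 {a b c : ℕ} {f : Fin j → ℕ × ℕ × ℕ} (i : Fin j) :
      EllipticPlay a b c f → EllipticPlay a b (c + 1) (addSyms i (0, 2, 1) f)

/-- A sequence `(n_1, …, n_j)` of positive integers is `(a, b, c)`-elliptic-reachable
if some play of the game ends with exactly `n_k` symbols in column `k` for every `k`,
every column contains a ✓ or contains a different number of −'s than +'s, and the first
column contains a ✓ or the number of −'s in it is not exactly one more than the number
of +'s in it. -/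
def EllipticReachable {j : ℕ} (a b c : ℕ) (n : Fin j → ℕ) : Prop :=
  ∃ f : Fin j → ℕ × ℕ × ℕ, EllipticPlay a b c f ∧
    (∀ k, (f k).1 + (f k).2.1 + (f k).2.2 = n k) ∧
    (∀ k, 0 < (f k).1 ∨ (f k).2.1 ≠ (f k).2.2) ∧
    (∀ k : Fin j, (k : ℕ) = 0 → (0 < (f k).1 ∨ (f k).2.1 ≠ (f k).2.2 + 1))

/-!
Once the symbols of a column are fixed, only its number `p` of `+`'s matters: a column of size
`n` without `✓` is good iff `2 p ≠ n`, and the first column also needs `2 p + 1 ≠ n`. For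
`c = 0`, fill the columns with `✓`'s and `−`'s. For `a = 0`, type-(5) moves alone reach every
`c ≤ ∑ ⌊n_k / 3⌋`. The sequences of the theorem are staircases with top column `t = (m - 1) / 2`:
column `t` has 2 or 4 symbols and may be followed by one column of size 1. Type-(3) moves from
columns 0 and 1 put two `+`'s into column `t` and one into the short column; each column
`1 ≤ k ≤ t` receives at most two type-(4) moves from column 0, leaving a multiple of 3 symbols
to be placed, and type-(5) moves place them. At most two `−`'s of type (2) remain, in column 0,
so this reaches `c = ⌊∑ n_k / 3⌋`. Dropping type-(5) moves (their symbols become `−`'s) keeps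
every column good and reaches every `c` down to the number of moves of types (3) and (4), which
is at most `∑ ⌊n_k / 3⌋ + 1`.
-/

theorem exists_le_sum_eq {ι : Type*} [Fintype ι] [DecidableEq ι] (cap : ι → ℕ) {c : ℕ}
    (hc : c ≤ ∑ i, cap i) : ∃ g ≤ cap, ∑ i, g i = c := by
  induction c with
  | zero => exact ⟨0, zero_le, by simp⟩
  | succ c ih =>
    obtain ⟨g, hg, rfl⟩ := ih (by omega)
    obtain ⟨i, -, hi⟩ := Finset.exists_lt_of_sum_lt (s := Finset.univ)
      (by omega : ∑ i, g i < ∑ i, cap i)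
    refine ⟨g + Pi.single i 1, fun k => ?_, by simp [Finset.sum_add_distrib]⟩
    by_cases hk : k = i
    · subst hk; simpa using hi
    · simpa [hk] using hg k

theorem Fin.sum_ite_val_eq {j : ℕ} (i v : ℕ) :
    ∑ k : Fin j, (if k.1 = i then v else 0) = if i < j then v else 0 := by
  split_ifs with h
  · rw [Finset.sum_eq_single ⟨i, h⟩ (fun k _ hk => if_neg fun hki => hk (Fin.ext hki))
      (by simp)]
    simp
  · exact Finset.sum_eq_zero fun k _ => if_neg (by omega)

def numSymbols (p : ℕ × ℕ × ℕ) : ℕ := p.1 + p.2.1 + p.2.2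

variable {j : ℕ}

theorem addSyms_eq_add_single (i : Fin j) (s : ℕ × ℕ × ℕ) (f : Fin j → ℕ × ℕ × ℕ) :
    addSyms i s f = f + Pi.single i s := by
  ext k <;> by_cases hk : k = i <;> simp [addSyms, hk]

theorem sum_numSymbols_addSyms (i : Fin j) (s : ℕ × ℕ × ℕ) (f : Fin j → ℕ × ℕ × ℕ) :
    ∑ k, numSymbols (addSyms i s f k) = ∑ k, numSymbols (f k) + numSymbols s := by
  have h : ∀ k, numSymbols (addSyms i s f k) =
      numSymbols (f k) + if i = k then numSymbols s else 0 := by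
    intro k
    by_cases hk : k = i
    · subst hk; simp [addSyms, numSymbols]; ring
    · simp [addSyms, hk, Ne.symm hk]
  simp [h, Finset.sum_add_distrib]

namespace EllipticPlay

variable {a b c : ℕ} {f : Fin j → ℕ × ℕ × ℕ}

theorem sum_numSymbols (h : EllipticPlay a b c f) :
    ∑ k, numSymbols (f k) = a + b + 3 * c := by
  induction h with
  | init => simp [numSymbols]
  | move1 _ _ ih | move2 _ _ ih | move3 _ _ _ _ _ _ _ ih | move4 _ _ _ _ ih | move5 _ _ ih =>
    simp only [sum_numSymbols_addSyms, ih]; simp only [numSymbols]; ring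

theorem move3_from_zero_one (h : EllipticPlay a b c f) (i : Fin j) (hi : 2 ≤ i.1) :
    EllipticPlay a b (c + 1)
      (f + fun k => (0, if k.1 ≤ 1 then 1 else 0, if k = i then 1 else 0)) := by
  convert h.move3 ⟨0, by omega⟩ ⟨1, by omega⟩ i (by simp) (Fin.lt_def.2 (by simp; omega))
    (Fin.lt_def.2 (by simp; omega)) using 1
  rw [addSyms_eq_add_single, addSyms_eq_add_single, addSyms_eq_add_single, add_assoc, add_assoc]
  congr 1
  funext k
  simp only [Pi.add_apply, Pi.single_apply, Fin.ext_iff]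
  split_ifs <;> simp_all <;> omega

theorem move4_from_zero (h : EllipticPlay a b c f) (i : Fin j) (hi : 1 ≤ i.1) :
    EllipticPlay a b (c + 1) (f + fun k =>
      (0, (if k.1 = 0 then 1 else 0) + (if k = i then 1 else 0), if k = i then 1 else 0)) := by
  convert h.move4 ⟨0, by omega⟩ i (Fin.lt_def.2 (by simp; omega)) using 1
  rw [addSyms_eq_add_single, addSyms_eq_add_single, add_assoc]
  congr 1
  funext k
  simp only [Pi.add_apply, Pi.single_apply, Fin.ext_iff]
  split_ifs <;> simp_all

section Repetition

variable {da db dc : ℕ}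

theorem add_nsmul {v : Fin j → ℕ × ℕ × ℕ}
    (hv : ∀ {a b c f}, EllipticPlay a b c f → EllipticPlay (a + da) (b + db) (c + dc) (f + v))
    (N : ℕ) (h : EllipticPlay a b c f) :
    EllipticPlay (a + N * da) (b + N * db) (c + N * dc) (f + N • v) := by
  induction N with
  | zero => simpa using h
  | succ N ih => simpa [add_mul, succ_nsmul, add_assoc] using hv ih

theorem add_sum_smul {v : Fin j → Fin j → ℕ × ℕ × ℕ} (g : Fin j → ℕ)
    (hv : ∀ i, g i ≠ 0 → ∀ {a b c f}, EllipticPlay a b c f →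
      EllipticPlay (a + da) (b + db) (c + dc) (f + v i))
    (h : EllipticPlay a b c f) :
    EllipticPlay (a + (∑ i, g i) * da) (b + (∑ i, g i) * db)
      (c + (∑ i, g i) * dc) (f + ∑ i, g i • v i) := by
  suffices ∀ S : Finset (Fin j), EllipticPlay (a + (∑ i ∈ S, g i) * da)
      (b + (∑ i ∈ S, g i) * db) (c + (∑ i ∈ S, g i) * dc) (f + ∑ i ∈ S, g i • v i) from this _
  intro S
  induction S using Finset.induction_on with
  | empty => simpa using h
  | insert i S hi ih =>
    rw [Finset.sum_insert hi, Finset.sum_insert hi]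
    by_cases hgi : g i = 0
    · simpa [hgi] using ih
    · convert add_nsmul (hv i hgi) (g i) ih using 1 <;> ring

end Repetition

/-- `mᵢ k` moves of type (i) put their `+` (for types (1) and (2): their symbol) into column
`k`; all moves of type (3) take their `−`'s from columns 0 and 1, all of type (4) from column 0. -/
theorem of_counts (m₁ m₂ m₃ m₄ m₅ : Fin j → ℕ) (h₃ : ∀ k, m₃ k ≠ 0 → 2 ≤ k.1)
    (h₄ : ∀ k, m₄ k ≠ 0 → 1 ≤ k.1) :
    EllipticPlay (∑ k, m₁ k) (∑ k, m₂ k) (∑ k, m₃ k + ∑ k, m₄ k + ∑ k, m₅ k)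
      (fun k => (m₁ k, m₂ k + (if k.1 ≤ 1 then ∑ i, m₃ i else 0) + m₄ k +
        (if k.1 = 0 then ∑ i, m₄ i else 0) + 2 * m₅ k, m₃ k + m₄ k + m₅ k)) := by
  have p₁ := add_sum_smul (da := 1) (db := 0) (dc := 0) m₁
    (fun i _ _ _ _ _ h => by rw [← addSyms_eq_add_single]; exact h.move1 i) init
  have p₂ := add_sum_smul (da := 0) (db := 1) (dc := 0) m₂
    (fun i _ _ _ _ _ h => by rw [← addSyms_eq_add_single]; exact h.move2 i) p₁
  have p₃ := add_sum_smul (da := 0) (db := 0) (dc := 1) m₃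
    (fun i hi _ _ _ _ h => move3_from_zero_one h i (h₃ i hi)) p₂
  have p₄ := add_sum_smul (da := 0) (db := 0) (dc := 1) m₄
    (fun i hi _ _ _ _ h => move4_from_zero h i (h₄ i hi)) p₃
  have p₅ := add_sum_smul (da := 0) (db := 0) (dc := 1) m₅
    (fun i _ _ _ _ _ h => by rw [← addSyms_eq_add_single]; exact h.move5 i) p₄
  convert p₅ using 1
  · simp
  · simp
  · simp
  funext k
  ext <;> simp [Finset.sum_apply, Pi.single_apply, Prod.fst_sum, Prod.snd_sum, mul_add,
    Finset.sum_add_distrib, mul_ite]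
  ring

end EllipticPlay

def tripleLoad (m₃ m₄ m₅ : Fin j → ℕ) (k : Fin j) : ℕ :=
  m₃ k + (if k.1 ≤ 1 then ∑ i, m₃ i else 0) + 2 * m₄ k + (if k.1 = 0 then ∑ i, m₄ i else 0) +
    3 * m₅ k

section TripleMoves

variable {m₃ m₄ m₅ : Fin j → ℕ}

theorem sum_tripleLoad (h₃ : ∀ k, m₃ k ≠ 0 → 2 ≤ k.1) (h₄ : ∀ k, m₄ k ≠ 0 → 1 ≤ k.1) :
    ∑ k, tripleLoad m₃ m₄ m₅ k = 3 * (∑ k, m₃ k + ∑ k, m₄ k + ∑ k, m₅ k) := by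
  have := (EllipticPlay.of_counts (fun _ => 0) (fun _ => 0) m₃ m₄ m₅ h₃ h₄).sum_numSymbols
  simp only [numSymbols, Finset.sum_const_zero, zero_add] at this
  rw [← this]
  exact Finset.sum_congr rfl fun k _ => by simp only [tripleLoad]; ring

theorem ellipticReachable_zero_of_tripleLoad_le {n : Fin j → ℕ} {b c : ℕ}
    (h₃ : ∀ k, m₃ k ≠ 0 → 2 ≤ k.1) (h₄ : ∀ k, m₄ k ≠ 0 → 1 ≤ k.1)
    (hload : ∀ k, tripleLoad m₃ m₄ m₅ k ≤ n k) (hsum : ∑ k, n k = b + 3 * c)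
    (hc : ∑ k, m₃ k + ∑ k, m₄ k + ∑ k, m₅ k = c)
    (hne : ∀ k, 2 * (m₃ k + m₄ k + m₅ k) ≠ n k)
    (hne₀ : ∀ k : Fin j, k.1 = 0 → 2 * m₅ k + 1 ≠ n k) :
    EllipticReachable 0 b c n := by
  have hplay := EllipticPlay.of_counts (fun _ => 0) (fun k => n k - tripleLoad m₃ m₄ m₅ k)
    m₃ m₄ m₅ h₃ h₄
  have hcol : ∀ k, (n k - tripleLoad m₃ m₄ m₅ k) + (if k.1 ≤ 1 then ∑ i, m₃ i else 0) + m₄ k +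
      (if k.1 = 0 then ∑ i, m₄ i else 0) + 2 * m₅ k + (m₃ k + m₄ k + m₅ k) = n k := by
    intro k; have := hload k; simp only [tripleLoad] at this ⊢; omega
  have hb : ∑ k, (n k - tripleLoad m₃ m₄ m₅ k) = b := by
    have := hplay.sum_numSymbols
    simp only [numSymbols, Finset.sum_const_zero, zero_add, hcol, hsum, hc] at this
    omega
  rw [Finset.sum_const_zero, hb, hc] at hplay
  refine ⟨_, hplay, fun k => ?_, fun k => Or.inr ?_, fun k hk => Or.inr ?_⟩
  · simpa [add_assoc] using hcol k
  · dsimp only; have := hcol k; have := hne k; omega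
  · have : m₃ k = 0 := by by_contra h; have := h₃ k h; omega
    have : m₄ k = 0 := by by_contra h; have := h₄ k h; omega
    dsimp only; have := hcol k; have := hne₀ k hk; omega

end TripleMoves

theorem ellipticReachable_zero_of_le_sum_div_three {n : Fin j → ℕ} {b c : ℕ}
    (hpos : ∀ k, 0 < n k) (h₀ : ∀ k : Fin j, k.1 = 0 → 4 ≤ n k)
    (hsum : ∑ k, n k = b + 3 * c) (hc : c ≤ ∑ k, n k / 3) : EllipticReachable 0 b c n := by
  obtain ⟨m₅, hm₅, rfl⟩ := exists_le_sum_eq (fun k => n k / 3) hc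
  refine ellipticReachable_zero_of_tripleLoad_le (m₃ := fun _ => 0) (m₄ := fun _ => 0) (m₅ := m₅)
    (by simp) (by simp) (fun k => ?_) hsum (by simp) (fun k => ?_) (fun k hk => ?_) <;>
    have : m₅ k ≤ n k / 3 := hm₅ k
  · simp only [tripleLoad, Finset.sum_const_zero, ite_self]; omega
  · have := hpos k; omega
  · have := h₀ k hk; omega

theorem ellipticReachable_without_triples {n : Fin j → ℕ} {a b : ℕ} (hpos : ∀ k, 0 < n k)
    (h₀ : ∀ k : Fin j, k.1 = 0 → 2 ≤ n k) (hsum : ∑ k, n k = a + b) :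
    EllipticReachable a b 0 n := by
  obtain ⟨m₁, hm₁, rfl⟩ := exists_le_sum_eq n (c := a) (by omega)
  have hplay := EllipticPlay.of_counts m₁ (fun k => n k - m₁ k) (fun _ => 0) (fun _ => 0)
    (fun _ => 0) (by simp) (by simp)
  have hb : ∑ k, (n k - m₁ k) = b := by
    rw [Finset.sum_tsub_distrib _ fun k _ => hm₁ k]; omega
  simp only [Finset.sum_const_zero, add_zero, mul_zero, ite_self, hb] at hplay
  refine ⟨_, hplay, fun k => ?_, fun k => ?_, fun k hk => ?_⟩ <;> dsimp only <;>
    have : m₁ k ≤ n k := hm₁ k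
  · omega
  · have := hpos k; omega
  · have := h₀ k hk; omega

structure Staircase (t : ℕ) (n : Fin j → ℕ) : Prop where
  two_le : 2 ≤ t
  lt_length : t < j
  length_le : j ≤ t + 2
  first : ∀ k : Fin j, k.1 = 0 → 2 * t + 2 ≤ n k
  middle : ∀ k : Fin j, 1 ≤ k.1 → k.1 < t → 6 ≤ n k
  top : ∀ k : Fin j, k.1 = t → n k = 2 ∨ n k = 4
  tail : ∀ k : Fin j, t < k.1 → n k = 1

namespace Staircase

variable {t : ℕ} {n : Fin j → ℕ}

def moves₃ (t : ℕ) (k : Fin j) : ℕ := if k.1 = t then 2 else if k.1 = t + 1 then 1 else 0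

/-- Chosen so that what remains of column `k` after the moves of types (3) and (4) is a
multiple of 3. -/
def moves₄ (t : ℕ) (n : Fin j → ℕ) (k : Fin j) : ℕ :=
  if k.1 = 0 ∨ t < k.1 then 0
  else if k.1 = t then n k / 2 - 1
  else (2 * n k + if k.1 = 1 then ∑ i : Fin j, moves₃ t i else 0) % 3

def moves₅ (t : ℕ) (n : Fin j → ℕ) (k : Fin j) : ℕ :=
  (n k - tripleLoad (moves₃ t) (moves₄ t n) 0 k) / 3

theorem sum_moves₃ (hn : Staircase t n) : ∑ k : Fin j, moves₃ t k = j - t + 1 := by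
  have : ∀ k : Fin j, moves₃ t k = (if k.1 = t then 2 else 0) + (if k.1 = t + 1 then 1 else 0) := by
    intro k; simp only [moves₃]; split_ifs <;> omega
  simp only [this, Finset.sum_add_distrib, Fin.sum_ite_val_eq]
  have := hn.lt_length; have := hn.length_le
  split_ifs <;> omega

theorem column_cases (hn : Staircase t n) (k : Fin j) :
    (k.1 = 0 ∧ moves₃ t k = 0 ∧ moves₄ t n k = 0 ∧
      tripleLoad (moves₃ t) (moves₄ t n) 0 k = ∑ i : Fin j, moves₃ t i + ∑ i, moves₄ t n i ∧
      2 * t + 2 ≤ n k) ∨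
    (1 ≤ k.1 ∧ k.1 < t ∧ moves₃ t k = 0 ∧
      moves₄ t n k = (2 * n k + if k.1 = 1 then ∑ i : Fin j, moves₃ t i else 0) % 3 ∧
      tripleLoad (moves₃ t) (moves₄ t n) 0 k =
        (if k.1 = 1 then ∑ i : Fin j, moves₃ t i else 0) + 2 * moves₄ t n k ∧
      6 ≤ n k) ∨
    (k.1 = t ∧ moves₃ t k = 2 ∧ 2 * moves₄ t n k + 2 = n k ∧
      tripleLoad (moves₃ t) (moves₄ t n) 0 k = n k ∧ (n k = 2 ∨ n k = 4)) ∨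
    (k.1 = t + 1 ∧ moves₃ t k = 1 ∧ moves₄ t n k = 0 ∧
      tripleLoad (moves₃ t) (moves₄ t n) 0 k = 1 ∧ n k = 1) := by
  have := hn.length_le; have := k.2
  have ht₀ : t ≠ 0 := by have := hn.two_le; omega
  have ht₁ : ¬ t ≤ 1 := by have := hn.two_le; omega
  rcases (by omega : k.1 = 0 ∨ (1 ≤ k.1 ∧ k.1 < t) ∨ k.1 = t ∨ k.1 = t + 1) with h | h | h | h
  · left
    simp [tripleLoad, moves₃, moves₄, h, hn.first k h, ht₀.symm]
  · right; left
    have h₁ : k.1 ≠ 0 := by omega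
    have h₂ : ¬ t < k.1 := by omega
    have h₃ : k.1 ≠ t := by omega
    have h₄ : k.1 ≠ t + 1 := by omega
    simp [tripleLoad, moves₃, moves₄, h, h₁, h₂, h₃, h₄, hn.middle k h.1 h.2]
    split_ifs <;> omega
  · right; right; left
    have := hn.top k h
    simp [tripleLoad, moves₃, moves₄, h, ht₀, ht₁]
    omega
  · right; right; right
    simp [tripleLoad, moves₃, moves₄, h, hn.tail k (by omega), ht₀]

theorem sum_moves₄_le (hn : Staircase t n) : ∑ k, moves₄ t n k ≤ 2 * t - 1 := by
  -- pad every column up to 2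
  have hcol : ∀ k : Fin j, moves₄ t n k + (if k.1 = 0 then 2 else 0) +
      (if k.1 = t then 1 else 0) + (if k.1 = t + 1 then 2 else 0) ≤ 2 := by
    intro k
    have := hn.two_le
    rcases column_cases hn k with h | h | h | h <;> split_ifs <;> omega
  have hsum := Finset.sum_le_sum (s := Finset.univ) fun k _ => hcol k
  simp only [Finset.sum_add_distrib, Fin.sum_ite_val_eq, Finset.sum_const, Finset.card_univ,
    Fintype.card_fin, smul_eq_mul] at hsum
  have := hn.lt_length; have := hn.length_le
  split_ifs at hsum <;> omega

theorem two_le_of_moves₃_ne_zero (hn : Staircase t n) (k : Fin j) (hk : moves₃ t k ≠ 0) :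
    2 ≤ k.1 := by
  have := hn.two_le
  rcases column_cases hn k with h | h | h | h <;> omega

theorem one_le_of_moves₄_ne_zero (hn : Staircase t n) (k : Fin j) (hk : moves₄ t n k ≠ 0) :
    1 ≤ k.1 := by
  have := hn.two_le
  rcases column_cases hn k with h | h | h | h <;> omega

theorem sum_moves₄_add_two_le (hn : Staircase t n) :
    ∑ k, moves₄ t n k + 2 ≤ ∑ k, n k / 3 := by
  have := hn.two_le
  have hcol : ∀ k : Fin j, moves₄ t n k + (if k.1 = 0 then 2 else 0) ≤ n k / 3 := fun k => by
    rcases column_cases hn k with h | h | h | h <;> split_ifs <;> omega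
  have hsum := Finset.sum_le_sum (s := Finset.univ) fun k _ => hcol k
  simp only [Finset.sum_add_distrib, Fin.sum_ite_val_eq] at hsum
  have := hn.lt_length
  split_ifs at hsum <;> omega

theorem sum_le_three_mul_sum_moves_add_two (hn : Staircase t n) :
    ∑ k, n k ≤ 3 * (∑ k : Fin j, moves₃ t k + ∑ k, moves₄ t n k + ∑ k, moves₅ t n k) + 2 := by
  have hcol : ∀ k : Fin j, n k ≤ tripleLoad (moves₃ t) (moves₄ t n) 0 k + 3 * moves₅ t n k +
      (if k.1 = 0 then 2 else 0) := fun k => by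
    have := hn.two_le
    simp only [moves₅]
    rcases column_cases hn k with h | h | h | h <;> split_ifs <;> omega
  have hsum := Finset.sum_le_sum (s := Finset.univ) fun k _ => hcol k
  simp only [Finset.sum_add_distrib, Fin.sum_ite_val_eq, ← Finset.mul_sum,
    sum_tripleLoad (two_le_of_moves₃_ne_zero hn) (one_le_of_moves₄_ne_zero hn), Pi.zero_apply,
    Finset.sum_const_zero] at hsum
  have := hn.lt_length
  split_ifs at hsum <;> omega

theorem ellipticReachable (hn : Staircase t n) {b c : ℕ} (hsum : ∑ k, n k = b + 3 * c) :
    EllipticReachable 0 b c n := by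
  have := hn.two_le
  by_cases hc : c ≤ ∑ k, n k / 3
  · exact ellipticReachable_zero_of_le_sum_div_three
      (fun k => by rcases column_cases hn k with h | h | h | h <;> omega)
      (fun k hk => by rcases column_cases hn k with h | h | h | h <;> omega) hsum hc
  have hW := sum_moves₃ hn
  have hX := sum_moves₄_le hn
  have hsmall := sum_moves₄_add_two_le hn
  have hlarge := sum_le_three_mul_sum_moves_add_two hn
  have := hn.lt_length; have := hn.length_le
  have hfree : c - ∑ k : Fin j, moves₃ t k - ∑ k, moves₄ t n k ≤ ∑ k, moves₅ t n k := by omega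
  obtain ⟨m₅, hm₅, hm₅sum⟩ := exists_le_sum_eq (moves₅ t n) hfree
  have hload : ∀ k, tripleLoad (moves₃ t) (moves₄ t n) m₅ k =
      tripleLoad (moves₃ t) (moves₄ t n) 0 k + 3 * m₅ k :=
    fun k => by simp only [tripleLoad, Pi.zero_apply]; ring
  refine ellipticReachable_zero_of_tripleLoad_le (m₅ := m₅) (two_le_of_moves₃_ne_zero hn)
    (one_le_of_moves₄_ne_zero hn) (fun k => ?_) hsum (by omega) (fun k => ?_) (fun k hk => ?_) <;>
  · have : m₅ k ≤ moves₅ t n k := hm₅ k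
    simp only [hload, moves₅] at *
    rcases column_cases hn k with h | h | h | h <;> (try split_ifs at h) <;> omega

end Staircase

/-- Strengthened inductive statement: for `m ≥ 5`, with `a = 0` or `c = 0`, any
sequence of one of the three listed forms with `n₁ ∈ {2m, 2m−2, 2m−4}` and sum
`a + b + 3c` is `(a, b, c)`-elliptic-reachable. -/
theorem elliptic_reachable_of_form_strong {j : ℕ} (hj : 0 < j) (m a b c : ℕ)
    (hm : 5 ≤ m) (hac : a = 0 ∨ c = 0) (n : Fin j → ℕ) (hpos : ∀ k, 0 < n k)
    (hsum : ∑ k, n k = a + b + 3 * c)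
    (hn1 : n ⟨0, hj⟩ = 2 * m ∨ n ⟨0, hj⟩ = 2 * m - 2 ∨ n ⟨0, hj⟩ = 2 * m - 4)
    (hform :
      (m % 2 = 0 ∧ j = m / 2 + 1 ∧
        (∀ k : Fin j, 1 ≤ (k : ℕ) → (k : ℕ) < m / 2 → n k = 2 * m - 4 * (k : ℕ)) ∧
        (∀ k : Fin j, (k : ℕ) = j - 1 → n k = 1)) ∨
      (m % 2 = 0 ∧ j = m / 2 ∧
        (∀ k : Fin j, 1 ≤ (k : ℕ) → n k = 2 * m - 4 * (k : ℕ))) ∨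
      (m % 2 = 1 ∧ j = (m + 1) / 2 ∧
        (∀ k : Fin j, 1 ≤ (k : ℕ) → n k = 2 * m - 4 * (k : ℕ)))) :
    EllipticReachable a b c n := by
  have hfirst : ∀ k : Fin j, k.1 = 0 → 2 * m - 4 ≤ n k := fun k hk => by
    obtain rfl : k = ⟨0, hj⟩ := Fin.ext hk
    omega
  rcases hac with rfl | rfl
  · have hst : Staircase ((m - 1) / 2) n := by
      rcases hform with ⟨hpar, hjm, hmid, hlast⟩ | ⟨hpar, hjm, hmid⟩ | ⟨hpar, hjm, hmid⟩
      · exact ⟨by omega, by omega, by omega, fun k hk => by have := hfirst k hk; omega,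
          fun k h₁ h₂ => by rw [hmid k h₁ (by omega)]; omega,
          fun k hk => by rw [hmid k (by omega) (by omega)]; omega,
          fun k hk => hlast k (by omega)⟩
      all_goals exact ⟨by omega, by omega, by omega, fun k hk => by have := hfirst k hk; omega,
        fun k h₁ h₂ => by rw [hmid k h₁]; omega, fun k hk => by rw [hmid k (by omega)]; omega,
        fun k hk => by have := k.2; omega⟩
    exact hst.ellipticReachable (by simpa using hsum)
  · exact ellipticReachable_without_triples hpos (fun k hk => by have := hfirst k hk; omega)
      (by simpa using hsum)
end
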